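/- If Δ_D(L, ρ*, t) ⊊ D ∩ {(δ,ε) : δ ≤ τ*_1} for a nonempty D-observation ρ* with first timestamp τ*_1 and t ≥ τ(ρ*), then for every finite timed word ρ*_1 and every t' ≥ t + τ(ρ*_1), the verdict V_D(L)(ρ* ·_t ρ*_1, t') ≠ ⊤. Dually with L̄ in place of L and ⊥ in place of ⊤. -/

import Mathlib

open scoped Classical

universe u v w

/-- A finite timed word: nonnegative, non-decreasing timestamps. -/
def IsFTW {A : Type u} (ρ : List (A × ℝ)) : Prop :=
  (∀ p ∈ ρ, 0 ≤ p.2) ∧ ρ.Chain' (fun p q => p.2 ≤ q.2)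

/-- Duration of a finite timed word: its last timestamp (0 for the empty word). -/
def dur {A : Type u} (ρ : List (A × ℝ)) : ℝ := ((ρ.getLast?).map Prod.snd).getD 0

/-- An infinite timed word: nonnegative, non-decreasing, divergent timestamps. -/
def IsITW {A : Type u} (μ : ℕ → A × ℝ) : Prop :=
  (∀ i, 0 ≤ (μ i).2) ∧ (∀ i, (μ i).2 ≤ (μ (i + 1)).2) ∧
    Filter.Tendsto (fun i => (μ i).2) Filter.atTop Filter.atTop

/-- Shift every timestamp of an infinite timed word by `t`. -/
def shiftI {A : Type u} (μ : ℕ → A × ℝ) (t : ℝ) : ℕ → A × ℝ :=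
  fun i => ((μ i).1, (μ i).2 + t)

/-- Shift every timestamp of a finite timed word by `t`. -/
def shiftF {A : Type u} (ρ : List (A × ℝ)) (t : ℝ) : List (A × ℝ) :=
  ρ.map (fun p => (p.1, p.2 + t))

/-- Timed concatenation of two finite timed words at time `t`. -/
def catF {A : Type u} (ρ : List (A × ℝ)) (t : ℝ) (ρ' : List (A × ℝ)) : List (A × ℝ) :=
  ρ ++ shiftF ρ' t

/-- Timed concatenation `ρ ·_t μ` of a finite and an infinite timed word. -/
def cat {A : Type u} (ρ : List (A × ℝ)) (t : ℝ) (μ : ℕ → A × ℝ) : ℕ → A × ℝ :=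
  fun i => if h : i < ρ.length then ρ.get ⟨i, h⟩
    else ((μ (i - ρ.length)).1, (μ (i - ρ.length)).2 + t)

/-- `ρ` is consistent with observation `ρs` at time `t` under latency `δ` and jitter `ε`. -/
def Consistent {A : Type u} (δ ε : ℝ) (ρs ρ : List (A × ℝ)) (t : ℝ) : Prop :=
  IsFTW ρ ∧ dur ρ ≤ t ∧ dur ρs ≤ t ∧ ρs.length ≤ ρ.length ∧
  (∀ i, i < ρs.length → ∀ p q, ρ[i]? = some p → ρs[i]? = some q →
      p.1 = q.1 ∧ δ ≤ q.2 - p.2 ∧ q.2 - p.2 ≤ δ + ε) ∧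
  (ρs.length < ρ.length → ∀ p, ρ[ρs.length]? = some p → t - (δ + ε) ≤ p.2)

/-- Ground-truths consistent with `ρs` at `t` under latency `δ` and jitter `ε`. -/
def GTd {A : Type u} (δ ε : ℝ) (ρs : List (A × ℝ)) (t : ℝ) : Set (List (A × ℝ)) :=
  {ρ | Consistent δ ε ρs ρ t}

/-- Ground-truths consistent with `ρs` at `t` under some delay in `D`. -/
def GT {A : Type u} (D : Set (ℝ × ℝ)) (ρs : List (A × ℝ)) (t : ℝ) : Set (List (A × ℝ)) :=
  {ρ | ∃ d ∈ D, Consistent d.1 d.2 ρs ρ t}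

/-- A delay set: a nonempty set of (latency, jitter) pairs in ℝ≥0². -/
def DelaySet (D : Set (ℝ × ℝ)) : Prop :=
  D.Nonempty ∧ ∀ d ∈ D, 0 ≤ d.1 ∧ 0 ≤ d.2

/-- A `D`-observation: a finite timed word whose first timestamp is at least `δ`
for some `(δ,ε) ∈ D`. -/
def DObs {A : Type u} (D : Set (ℝ × ℝ)) (ρs : List (A × ℝ)) : Prop :=
  IsFTW ρs ∧ ∃ d ∈ D, ∀ p ∈ ρs.head?, d.1 ≤ p.2

/-- The three-valued verdict domain. -/
inductive Verdict | top | bot | unknown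
deriving DecidableEq

/-- Monitoring verdict under delay. -/
noncomputable def verdict {A : Type u} (D : Set (ℝ × ℝ)) (L : Set (ℕ → A × ℝ))
    (ρs : List (A × ℝ)) (t : ℝ) : Verdict :=
  if ∀ ρ ∈ GT D ρs t, ∀ μ, IsITW μ → cat ρ t μ ∈ L then .top
  else if ∀ ρ ∈ GT D ρs t, ∀ μ, IsITW μ → cat ρ t μ ∉ L then .bot
  else .unknown

/-- Equal-length consistent ground-truths. -/
def GTel {A : Type u} (δ ε : ℝ) (ρs : List (A × ℝ)) (t : ℝ) : Set (List (A × ℝ)) :=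
  {ρ | Consistent δ ε ρs ρ t ∧ ρ.length = ρs.length}

/-- Equal-length monitoring verdict under delay. -/
noncomputable def verdictEL {A : Type u} (D : Set (ℝ × ℝ)) (L : Set (ℕ → A × ℝ))
    (ρs : List (A × ℝ)) (t : ℝ) : Verdict :=
  if ∀ d ∈ D, ∀ ρ ∈ GTel d.1 d.2 ρs t, ∀ μ, IsITW μ →
      cat ρ (max (dur ρ) (t - (d.1 + d.2))) μ ∈ L then .top
  else if ∀ d ∈ D, ∀ ρ ∈ GTel d.1 d.2 ρs t, ∀ μ, IsITW μ →
      cat ρ (max (dur ρ) (t - (d.1 + d.2))) μ ∉ L then .bot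
  else .unknown

/-- The set of delays consistent with observation `ρs` at time `t` w.r.t. `L`. -/
def ConsDelays {A : Type u} (L : Set (ℕ → A × ℝ)) (ρs : List (A × ℝ)) (t : ℝ) :
    Set (ℝ × ℝ) :=
  {d | ∃ ρ ∈ GTd d.1 d.2 ρs t, ∃ μ, IsITW μ ∧ cat ρ t μ ∈ L}

/-- Extension relation on (finite timed word, time) pairs. -/
def ExtRel {A : Type u} (ρ : List (A × ℝ)) (t : ℝ) (ρ' : List (A × ℝ)) (t' : ℝ) : Prop :=
  ρ <+: ρ' ∧ ((ρ.length = ρ'.length ∧ t ≤ t') ∨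
    (ρ.length < ρ'.length ∧ ∀ p, ρ'[ρ.length]? = some p → t ≤ p.2))
/-- A timed Büchi automaton with locations `Q` and clocks `C`;
guards are modeled as sets of clock valuations. -/
structure TBA (A : Type u) (Q : Type v) (C : Type w) where
  init : Set Q
  trans : Set (Q × Q × A × Set C × Set (C → ℝ))
  acc : Set Q

/-- Reset the clocks in `lam` to zero. -/
noncomputable def resetVal {C : Type w} (lam : Set C) (v : C → ℝ) : C → ℝ :=
  fun x => if x ∈ lam then 0 else v x

/-- One transition step of a TBA, reading letter `a` after `d` time units. -/
def Step {A : Type u} {Q : Type v} {C : Type w} (M : TBA A Q C)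
    (s : Q × (C → ℝ)) (a : A) (d : ℝ) (s' : Q × (C → ℝ)) : Prop :=
  ∃ q' lam g, (s.1, q', a, lam, g) ∈ M.trans ∧ (fun x => s.2 x + d) ∈ g ∧
    s'.1 = q' ∧ s'.2 = resetVal lam (fun x => s.2 x + d)

/-- An infinite run of a TBA from state `s0` over the infinite timed word `μ`. -/
def InfRun {A : Type u} {Q : Type v} {C : Type w} (M : TBA A Q C)
    (s0 : Q × (C → ℝ)) (μ : ℕ → A × ℝ) (r : ℕ → Q × (C → ℝ)) : Prop :=
  r 0 = s0 ∧ ∀ i, Step M (r i) (μ i).1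
    ((μ i).2 - (if i = 0 then 0 else (μ (i - 1)).2)) (r (i + 1))

/-- The language of a TBA from a given state. -/
def LangFrom {A : Type u} {Q : Type v} {C : Type w} (M : TBA A Q C)
    (s : Q × (C → ℝ)) : Set (ℕ → A × ℝ) :=
  {μ | IsITW μ ∧ ∃ r, InfRun M s μ r ∧ {i | (r i).1 ∈ M.acc}.Infinite}

/-- The language of a TBA. -/
def Lang {A : Type u} {Q : Type v} {C : Type w} (M : TBA A Q C) : Set (ℕ → A × ℝ) :=
  {μ | ∃ q0 ∈ M.init, μ ∈ LangFrom M (q0, fun _ => 0)}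

/-- The states of a TBA with nonempty language. -/
def NonEmptyStates {A : Type u} {Q : Type v} {C : Type w} (M : TBA A Q C) :
    Set (Q × (C → ℝ)) :=
  {s | (LangFrom M s).Nonempty}

/-- The `i`-th timestamp of a finite timed word (default 0). -/
def tsd {A : Type u} (ρ : List (A × ℝ)) (i : ℕ) : ℝ := ((ρ[i]?).map Prod.snd).getD 0

/-- A finite run of a TBA from `s0` over `ρ`, ending in `send`. -/
def FinRun {A : Type u} {Q : Type v} {C : Type w} (M : TBA A Q C)
    (s0 : Q × (C → ℝ)) (ρ : List (A × ℝ)) (send : Q × (C → ℝ)) : Prop :=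
  ∃ r : ℕ → Q × (C → ℝ), r 0 = s0 ∧ r ρ.length = send ∧
    ∀ i, i < ρ.length → ∀ p, ρ[i]? = some p →
      Step M (r i) p.1 (p.2 - (if i = 0 then 0 else tsd ρ (i - 1))) (r (i + 1))

/-- The reach-set of `ρs` in `M` at `t` w.r.t. `D`: states reached on
equal-length consistent ground-truths, time-shifted by
`max 0 (t - (dur ρ + δ + ε))`. -/
def ReachSet {A : Type u} {Q : Type v} {C : Type w} (M : TBA A Q C)
    (D : Set (ℝ × ℝ)) (ρs : List (A × ℝ)) (t : ℝ) : Set (Q × (C → ℝ)) :=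
  {s | ∃ d ∈ D, ∃ ρ ∈ GTel d.1 d.2 ρs t, ∃ q0 ∈ M.init, ∃ v : C → ℝ,
      FinRun M (q0, fun _ => 0) ρ (s.1, v) ∧
      s.2 = fun x => v x + max 0 (t - (dur ρ + d.1 + d.2))}

/-- The automata-based monitor. -/
noncomputable def Monitor {A : Type u} {Q : Type v} {C : Type w} {Q' : Type*} {C' : Type*}
    (M : TBA A Q C) (Mbar : TBA A Q' C') (D : Set (ℝ × ℝ))
    (ρs : List (A × ℝ)) (t : ℝ) : Verdict :=
  if ReachSet Mbar D ρs t ∩ NonEmptyStates Mbar = ∅ then .top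
  else if ReachSet M D ρs t ∩ NonEmptyStates M = ∅ then .bot
  else .unknown

/-- Input projection of a timed word, w.r.t. the input indicator `inp`. -/
def inProj {A : Type u} (inp : A → Bool) (ρ : List (A × ℝ)) : List (A × ℝ) :=
  ρ.filter (fun p => inp p.1)

/-- Output projection of a timed word. -/
def outProj {A : Type u} (inp : A → Bool) (ρ : List (A × ℝ)) : List (A × ℝ) :=
  ρ.filter (fun p => !inp p.1)

/-- Testing consistency of ground-truth `ρ` with observation `ρs` at time `t`
under IO delay `d = (δ_I, ε_I, δ_O, ε_O)`. -/
def TCons {A : Type u} (inp : A → Bool) (d : ℝ × ℝ × ℝ × ℝ)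
    (ρs ρ : List (A × ℝ)) (t : ℝ) : Prop :=
  IsFTW ρ ∧ dur ρs ≤ t ∧ dur ρ ≤ max t (dur (inProj inp ρs) + (d.1 + d.2.1)) ∧
  (inProj inp ρ).length = (inProj inp ρs).length ∧
  (∀ (i : ℕ) (p q : A × ℝ), (inProj inp ρ)[i]? = some p → (inProj inp ρs)[i]? = some q →
      p.1 = q.1 ∧ d.1 ≤ p.2 - q.2 ∧ p.2 - q.2 ≤ d.1 + d.2.1) ∧
  (outProj inp ρs).length ≤ (outProj inp ρ).length ∧
  (∀ i, i < (outProj inp ρs).length → ∀ p q, (outProj inp ρ)[i]? = some p →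
      (outProj inp ρs)[i]? = some q →
      p.1 = q.1 ∧ d.2.2.1 ≤ q.2 - p.2 ∧ q.2 - p.2 ≤ d.2.2.1 + d.2.2.2) ∧
  ((outProj inp ρs).length < (outProj inp ρ).length →
    ∀ p, (outProj inp ρ)[(outProj inp ρs).length]? = some p →
      t - (d.2.2.1 + d.2.2.2) ≤ p.2)

/-- Testing-consistent ground-truths under some delay in `D`. -/
def GThat {A : Type u} (inp : A → Bool) (D : Set (ℝ × ℝ × ℝ × ℝ))
    (ρs : List (A × ℝ)) (t : ℝ) : Set (List (A × ℝ)) :=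
  {ρ | ∃ d ∈ D, TCons inp d ρs ρ t}

/-- An IO delay set: nonempty subset of ℝ≥0⁴. -/
def IODelaySet (D : Set (ℝ × ℝ × ℝ × ℝ)) : Prop :=
  D.Nonempty ∧ ∀ d ∈ D, 0 ≤ d.1 ∧ 0 ≤ d.2.1 ∧ 0 ≤ d.2.2.1 ∧ 0 ≤ d.2.2.2

/-- An IO `D`-observation: the first observed output has timestamp at least `δ_O`
for some delay tuple in `D`. -/
def DObsIO {A : Type u} (inp : A → Bool) (D : Set (ℝ × ℝ × ℝ × ℝ))
    (ρs : List (A × ℝ)) : Prop :=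
  IsFTW ρs ∧ ∃ d ∈ D, ∀ p ∈ (outProj inp ρs).head?, d.2.2.1 ≤ p.2

/-- Testing verdict under delay. -/
noncomputable def tverdict {A : Type u} (inp : A → Bool) (D : Set (ℝ × ℝ × ℝ × ℝ))
    (L : Set (ℕ → A × ℝ)) (ρs : List (A × ℝ)) (t : ℝ) : Verdict :=
  if ∀ ρ ∈ GThat inp D ρs t, ∀ μ, IsITW μ → cat ρ (max t (dur ρ)) μ ∈ L then .top
  else if ∀ ρ ∈ GThat inp D ρs t, ∀ μ, IsITW μ → cat ρ (max t (dur ρ)) μ ∉ L then .bot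
  else .unknown

/-- The set of IO delays consistent with observation `ρs` at `t` w.r.t. `L`. -/
def TConsDelays {A : Type u} (inp : A → Bool) (L : Set (ℕ → A × ℝ))
    (ρs : List (A × ℝ)) (t : ℝ) : Set (ℝ × ℝ × ℝ × ℝ) :=
  {d | ∃ ρ, TCons inp d ρs ρ t ∧ ∃ μ, IsITW μ ∧ cat ρ (max t (dur ρ)) μ ∈ L}

section helpersStmt9
variable {A : Type u}

lemma snd_mono9 {l : List (A × ℝ)} (hm : l.Chain' (fun p q => p.2 ≤ q.2))
    {i j : ℕ} (hij : i ≤ j) (hj : j < l.length) :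
    (l[i]'(lt_of_le_of_lt hij hj)).2 ≤ l[j].2 := by
  induction j with
  | zero =>
    have : i = 0 := by omega
    subst this; exact le_refl _
  | succ n ih =>
    rcases Nat.lt_or_ge i (n+1) with h | h
    · have hn : n < l.length - 1 := by omega
      have step := List.isChain_iff_getElem.mp hm n (by omega)
      exact le_trans (ih (by omega) (by omega)) step
    · have : i = n + 1 := by omega
      subst this; exact le_refl _

lemma dur_eq_getElem9 {l : List (A × ℝ)} (h : l ≠ []) :
    dur l = (l[l.length - 1]'(by simp [Nat.sub_lt (List.length_pos_iff.mpr h)])).2 := by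
  rw [dur, List.getLast?_eq_getLast h, List.getLast_eq_getElem]
  rfl

lemma elem_le_dur9 {l : List (A × ℝ)} (hm : l.Chain' (fun p q => p.2 ≤ q.2))
    {i : ℕ} (hi : i < l.length) : l[i].2 ≤ dur l := by
  have h : l ≠ [] := by rintro rfl; simp at hi
  rw [dur_eq_getElem9 h]
  exact snd_mono9 hm (by omega) (by omega)

lemma dur_le_of_forall9 {l : List (A × ℝ)} {c : ℝ} (hc : 0 ≤ c)
    (h : ∀ i (hi : i < l.length), l[i].2 ≤ c) : dur l ≤ c := by
  rcases eq_or_ne l [] with rfl | hne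
  · simpa [dur] using hc
  · rw [dur_eq_getElem9 hne]; exact h _ _

lemma dur_nonneg9 {l : List (A × ℝ)} (h : IsFTW l) : 0 ≤ dur l := by
  rcases eq_or_ne l [] with rfl | hne
  · simp [dur]
  · rw [dur_eq_getElem9 hne]
    exact h.1 _ (List.getElem_mem _)

/-- Split a snd-monotone list at threshold `c`. -/
lemma mono_split9 (l : List (A × ℝ)) (hm : l.Chain' (fun p q => p.2 ≤ q.2)) (c : ℝ) :
    ∃ k ≤ l.length, (∀ i (h : i < l.length), i < k → l[i].2 ≤ c) ∧
      (∀ i (h : i < l.length), k ≤ i → c < l[i].2) := by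
  by_cases hS : ∃ i, ∃ h : i < l.length, c < l[i].2
  · refine ⟨Nat.find hS, ?_, ?_, ?_⟩
    · obtain ⟨hkl, _⟩ := Nat.find_spec hS
      omega
    · intro i h hik
      have := Nat.find_min hS hik
      push_neg at this
      exact this h
    · intro i h hki
      obtain ⟨hkl, hkgt⟩ := Nat.find_spec hS
      exact lt_of_lt_of_le hkgt (snd_mono9 hm hki h)
  · push_neg at hS
    exact ⟨l.length, le_refl _, fun i h _ => hS i h, fun i h hle => absurd h (by omega)⟩

lemma key9 [Nonempty A] (L : Set (ℕ → A × ℝ)) (D : Set (ℝ × ℝ)) (hD : DelaySet D)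
    (ρs : List (A × ℝ)) (hρs : IsFTW ρs) (hne : ρs ≠ []) (t : ℝ) (ht : dur ρs ≤ t)
    (d : ℝ × ℝ) (hdD : d ∈ D) (hhead : ∀ p ∈ ρs.head?, d.1 ≤ p.2)
    (hnc : d ∉ ConsDelays L ρs t)
    (ρs1 : List (A × ℝ)) (h1 : IsFTW ρs1) (t' : ℝ) (ht' : t + dur ρs1 ≤ t') :
    ∃ ρ ∈ GT D (catF ρs t ρs1) t', ∃ μ, IsITW μ ∧ cat ρ t' μ ∉ L := by
  obtain ⟨δ, ε⟩ := d
  obtain ⟨hδ0, hε0⟩ := hD.2 _ hdD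
  have hρs0 : 0 < ρs.length := List.length_pos_iff.mpr hne
  have hhead' : δ ≤ (ρs[0]'hρs0).2 := by
    have := hhead (ρs.head hne) (by rw [List.head?_eq_head hne]; rfl)
    simpa [List.head_eq_getElem] using this
  have hts_ρs : ∀ i (h : i < ρs.length), δ ≤ (ρs[i]).2 := fun i h =>
    le_trans hhead' (snd_mono9 hρs.2 (Nat.zero_le i) h)
  have hδt : δ ≤ t := le_trans hhead' (le_trans (elem_le_dur9 hρs.2 hρs0) ht)
  have h10 : 0 ≤ dur ρs1 := dur_nonneg9 h1
  have htt' : t ≤ t' := by linarith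
  have ht'0 : 0 ≤ t' := by linarith
  set ext := ρs ++ shiftF ρs1 t with hextdef
  have hcatF : catF ρs t ρs1 = ext := rfl
  have hextlen : ext.length = ρs.length + ρs1.length := by
    simp [hextdef, shiftF]
  have hextL : ∀ i (hi : i < ρs.length), ext[i]'(by omega) = ρs[i] :=
    fun i hi => List.getElem_append_left hi
  have hextR : ∀ i (hi : ρs.length ≤ i) (hi2 : i < ext.length),
      ext[i] = ((ρs1[i - ρs.length]'(by omega)).1,
                (ρs1[i - ρs.length]'(by omega)).2 + t) := by
    intro i hi hi2
    rw [List.getElem_append_right hi]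
    simp [shiftF]
  -- lower and upper bounds on timestamps of ext
  have hextδ : ∀ i (hi : i < ext.length), δ ≤ ext[i].2 := by
    intro i hi
    rcases Nat.lt_or_ge i ρs.length with h | h
    · rw [hextL i h]; exact hts_ρs i h
    · rw [hextR i h hi]
      have := h1.1 _ (List.getElem_mem (show i - ρs.length < ρs1.length by omega))
      simp only []
      linarith
  have hextub : ∀ i (hi : i < ext.length), ext[i].2 ≤ t' := by
    intro i hi
    rcases Nat.lt_or_ge i ρs.length with h | h
    · rw [hextL i h]
      have := elem_le_dur9 hρs.2 h
      linarith
    · rw [hextR i h hi]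
      have := elem_le_dur9 h1.2 (show i - ρs.length < ρs1.length by omega)
      simp only []
      linarith
  have hextFTW : IsFTW ext := by
    constructor
    · intro p hp
      obtain ⟨i, hi, rfl⟩ := List.mem_iff_getElem.mp hp
      linarith [hextδ i hi]
    · unfold List.Chain'; rw [hextdef, List.isChain_append]
      refine ⟨hρs.2, ?_, ?_⟩
      · rw [shiftF, List.isChain_map]
        exact List.IsChain.imp (fun a b hab => by simp only []; linarith) h1.2
      · intro x hx y hy
        have hxl : ρs.getLast? = some x := hx
        have hxd : x.2 ≤ dur ρs := by
          rw [dur, hxl]; simp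
        rw [shiftF, List.head?_map] at hy
        obtain ⟨q, hq, rfl⟩ := Option.mem_map.mp hy
        have hq0 : 0 ≤ q.2 := h1.1 q (List.mem_of_mem_head? hq)
        simp only []
        linarith
  set ρ : List (A × ℝ) := ext.map (fun p => (p.1, p.2 - δ)) with hρdef
  have hρlen : ρ.length = ext.length := by simp [hρdef]
  have hρi : ∀ i (hi : i < ext.length), ρ[i]'(by omega) = ((ext[i]).1, (ext[i]).2 - δ) :=
    fun i hi => List.getElem_map _
  have hρFTW : IsFTW ρ := by
    constructor
    · intro p hp
      obtain ⟨i, hi, rfl⟩ := List.mem_iff_getElem.mp hp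
      rw [hρi i (by omega)]
      have := hextδ i (by omega)
      simp only []
      linarith
    · unfold List.Chain'; rw [hρdef, List.isChain_map]
      exact List.IsChain.imp (fun a b hab => by simp only []; linarith) hextFTW.2
  have hρub : ∀ i (hi : i < ρ.length), ρ[i].2 ≤ t' := by
    intro i hi
    rw [hρi i (by omega)]
    have := hextub i (by omega)
    simp only []
    linarith
  have hρdur : dur ρ ≤ t' := dur_le_of_forall9 ht'0 hρub
  have hextdur : dur ext ≤ t' := dur_le_of_forall9 ht'0 hextub
  have hconsext : Consistent δ ε ext ρ t' := by
    refine ⟨hρFTW, hρdur, hextdur, by omega, ?_, ?_⟩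
    · intro i hi p q hp hq
      rw [List.getElem?_eq_getElem (show i < ρ.length by omega)] at hp
      rw [List.getElem?_eq_getElem (show i < ext.length by omega)] at hq
      injection hp with hp; injection hq with hq
      subst hp; subst hq
      rw [hρi i (by omega)]
      exact ⟨rfl, by simp only []; constructor <;> linarith⟩
    · intro hlt
      omega
  have hρGT : ρ ∈ GT D ext t' := ⟨(δ, ε), hdD, hconsext⟩
  set μ : ℕ → A × ℝ := fun j => (Classical.arbitrary A, (j : ℝ)) with hμdef
  have hμ : IsITW μ := by
    refine ⟨fun i => by simp [hμdef], fun i => by simp [hμdef], ?_⟩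
    simpa [hμdef] using tendsto_natCast_atTop_atTop (R := ℝ)
  by_cases hmem : cat ρ t' μ ∈ L
  · exfalso
    apply hnc
    -- build the consistent ground truth of ρs at t
    obtain ⟨k, hkle, hk1, hk2⟩ := mono_split9 ρ hρFTW.2 t
    have hρslt : ∀ i (hi : i < ρs.length), (ρ[i]'(by omega)).2 ≤ t := by
      intro i hi
      rw [hρi i (by omega), hextL i hi]
      have := elem_le_dur9 hρs.2 hi
      simp only []
      linarith
    have hkρs : ρs.length ≤ k := by
      by_contra hcon
      push_neg at hcon
      have h2 := hk2 k (by omega) (le_refl _)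
      have h3 := hρslt k (by omega)
      linarith
    set ν := cat ρ t' μ with hνdef
    have hνlt : ∀ i (hi : i < ρ.length), ν i = ρ[i] := by
      intro i hi
      simp [hνdef, cat, hi]
    have hνge : ∀ i, ρ.length ≤ i →
        ν i = (Classical.arbitrary A, ((i - ρ.length : ℕ) : ℝ) + t') := by
      intro i hi
      simp [hνdef, cat, Nat.not_lt.mpr hi, hμdef]
    have hνmono : ∀ i, (ν i).2 ≤ (ν (i+1)).2 := by
      intro i
      rcases Nat.lt_or_ge (i+1) ρ.length with h | h
      · rw [hνlt i (by omega), hνlt (i+1) h]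
        have := List.isChain_iff_getElem.mp hρFTW.2 i (by omega)
        simpa using this
      · rcases Nat.lt_or_ge i ρ.length with h' | h'
        · rw [hνlt i h', hνge (i+1) h]
          have := hρub i h'
          have : ρ[i].2 ≤ t' := this
          have hc : (0:ℝ) ≤ ((i + 1 - ρ.length : ℕ) : ℝ) := Nat.cast_nonneg _
          simp only []
          linarith
        · rw [hνge i h', hνge (i+1) (by omega)]
          simp only []
          have : ((i - ρ.length : ℕ) : ℝ) ≤ ((i + 1 - ρ.length : ℕ) : ℝ) := by
            exact_mod_cast Nat.sub_le_sub_right (by omega) _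
          linarith
    have hνget : ∀ j, k ≤ j → t ≤ (ν j).2 := by
      intro j hj
      rcases Nat.lt_or_ge j ρ.length with h | h
      · rw [hνlt j h]
        exact le_of_lt (hk2 j h hj)
      · rw [hνge j h]
        have hc : (0:ℝ) ≤ ((j - ρ.length : ℕ) : ℝ) := Nat.cast_nonneg _
        simp only []
        linarith
    set ρ₀ := ρ.take k with hρ₀def
    have hρ₀len : ρ₀.length = k := by
      simp [hρ₀def, List.length_take]
      omega
    have hρ₀i : ∀ i (hi : i < k), ρ₀[i]'(by omega) = ρ[i]'(by omega) := by
      intro i hi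
      simp [hρ₀def, List.getElem_take]
    set μ₀ : ℕ → A × ℝ := fun j => ((ν (k+j)).1, (ν (k+j)).2 - t) with hμ₀def
    have hμ₀ : IsITW μ₀ := by
      refine ⟨?_, ?_, ?_⟩
      · intro i
        simp only [hμ₀def]
        have := hνget (k+i) (by omega)
        linarith
      · intro i
        simp only [hμ₀def]
        have := hνmono (k+i)
        have he : k + (i+1) = (k+i) + 1 := by omega
        rw [he]
        linarith
      · refine Filter.tendsto_atTop_mono' Filter.atTop
          (f₁ := fun j : ℕ => (j : ℝ) + (t' - t - (ρ.length : ℝ)))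
          (f₂ := fun i : ℕ => (μ₀ i).2) ?_ ?_
        · filter_upwards [Filter.eventually_ge_atTop ρ.length] with j hj
          show (j : ℝ) + (t' - t - (ρ.length : ℝ)) ≤ (ν (k+j)).2 - t
          rw [hνge (k+j) (by omega)]
          simp only []
          have h1' : ((j - ρ.length : ℕ) : ℝ) ≤ ((k + j - ρ.length : ℕ) : ℝ) := by
            exact_mod_cast Nat.sub_le_sub_right (by omega) _
          have h2' : ((j - ρ.length : ℕ) : ℝ) = (j : ℝ) - (ρ.length : ℝ) :=
            Nat.cast_sub hj
          linarith
        · exact Filter.tendsto_atTop_add_const_right _ _ tendsto_natCast_atTop_atTop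
    have hcateq : cat ρ₀ t μ₀ = ν := by
      funext i
      by_cases hi : i < ρ₀.length
      · simp only [cat, dif_pos hi, List.get_eq_getElem]
        rw [hρ₀i i (by omega), ← hνlt i (by omega)]
      · simp only [cat, dif_neg hi]
        have hik : k ≤ i := by omega
        have he : k + (i - ρ₀.length) = i := by omega
        simp only [hμ₀def, he]
        have : (ν i).2 - t + t = (ν i).2 := by ring
        rw [this]
    have hρ₀cons : Consistent δ ε ρs ρ₀ t := by
      refine ⟨?_, ?_, ht, by omega, ?_, ?_⟩
      · exact ⟨fun p hp => hρFTW.1 p (List.mem_of_mem_take hp), hρFTW.2.take k⟩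
      · apply dur_le_of_forall9 (by linarith)
        intro i hi
        rw [hρ₀i i (by omega)]
        exact hk1 i (by omega) (by omega)
      · intro i hi p q hp hq
        rw [List.getElem?_eq_getElem (show i < ρ₀.length by omega)] at hp
        rw [List.getElem?_eq_getElem (show i < ρs.length by omega)] at hq
        injection hp with hp; injection hq with hq
        subst hp; subst hq
        rw [hρ₀i i (by omega), hρi i (by omega), hextL i hi]
        exact ⟨rfl, by simp only []; constructor <;> linarith⟩
      · intro hlt p hp
        rw [List.getElem?_eq_getElem (show ρs.length < ρ₀.length from hlt)] at hp
        injection hp with hp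
        subst hp
        have hlen1 : ρs.length < ext.length := by omega
        rw [hρ₀i _ (by omega), hρi _ (by omega), hextR _ (le_refl _) hlen1]
        have h0 : 0 ≤ (ρs1[ρs.length - ρs.length]'(by omega)).2 :=
          h1.1 _ (List.getElem_mem _)
        simp only []
        linarith
    exact ⟨ρ₀, hρ₀cons, μ₀, hμ₀, by rw [hcateq]; exact hmem⟩
  · exact ⟨ρ, hρGT, μ, hμ, hmem⟩

end helpersStmt9

/-- once the set of consistent delays is a strict subset of
`D ∩ {(δ,ε) : δ ≤ τ*₁}`, no extension of the observation yields a `⊤`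
verdict (and dually for the complement and `⊥`). -/
theorem stmt9 {A : Type u} [Nonempty A] (L : Set (ℕ → A × ℝ))
    (D : Set (ℝ × ℝ)) (hD : DelaySet D)
    (ρs : List (A × ℝ)) (hobs : DObs D ρs) (hne : ρs ≠ [])
    (t : ℝ) (ht : dur ρs ≤ t) :
    ((ConsDelays L ρs t ∩ D ⊂ D ∩ {d | ∀ p ∈ ρs.head?, d.1 ≤ p.2}) →
      ∀ ρs1 : List (A × ℝ), IsFTW ρs1 → ∀ t', t + dur ρs1 ≤ t' →
        verdict D L (catF ρs t ρs1) t' ≠ .top) ∧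
    ((ConsDelays Lᶜ ρs t ∩ D ⊂ D ∩ {d | ∀ p ∈ ρs.head?, d.1 ≤ p.2}) →
      ∀ ρs1 : List (A × ℝ), IsFTW ρs1 → ∀ t', t + dur ρs1 ≤ t' →
        verdict D L (catF ρs t ρs1) t' ≠ .bot) := by
  obtain ⟨hρs, _⟩ := hobs
  constructor
  · intro hss ρs1 h1 t' ht'
    obtain ⟨d, hdmem, hdnot⟩ := Set.exists_of_ssubset hss
    have hdD : d ∈ D := hdmem.1
    have hhead : ∀ p ∈ ρs.head?, d.1 ≤ p.2 := hdmem.2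
    have hnc : d ∉ ConsDelays L ρs t := fun h => hdnot ⟨h, hdD⟩
    obtain ⟨ρ, hρ, μ, hμ, hnL⟩ := key9 L D hD ρs hρs hne t ht d hdD hhead hnc ρs1 h1 t' ht'
    unfold verdict
    split_ifs with h1' h2'
    · exact absurd (h1' ρ hρ μ hμ) hnL
    · exact fun h => Verdict.noConfusion h
    · exact fun h => Verdict.noConfusion h
  · intro hss ρs1 h1 t' ht'
    obtain ⟨d, hdmem, hdnot⟩ := Set.exists_of_ssubset hss
    have hdD : d ∈ D := hdmem.1
    have hhead : ∀ p ∈ ρs.head?, d.1 ≤ p.2 := hdmem.2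
    have hnc : d ∉ ConsDelays Lᶜ ρs t := fun h => hdnot ⟨h, hdD⟩
    obtain ⟨ρ, hρ, μ, hμ, hnL⟩ := key9 Lᶜ D hD ρs hρs hne t ht d hdD hhead hnc ρs1 h1 t' ht'
    have hL : cat ρ t' μ ∈ L := by
      by_contra h
      exact hnL h
    unfold verdict
    split_ifs with h1' h2'
    · exact fun h => Verdict.noConfusion h
    · exact absurd hL (h2' ρ hρ μ hμ)
    · exact fun h => Verdict.noConfusion h
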